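/- arXiv:2506.11848 — 8 statements merged into one kernel-verified Lean document; each statement's English description precedes it below -/
import Mathlib

section
/- Let $v_1,\ldots,v_T$ be vectors in an inner product space with $\|v_t\| \leq M$ for all $t$, and suppose $\langle v_t, \sum_{s=1}^{t-1} v_s \rangle \leq 0$ for every $t$. Then $\left\|\frac{1}{T}\sum_{t=1}^T v_t\right\| \leq \frac{M}{\sqrt{T}}$. -/
open Finset

section

variable {E : Type*} [NormedAddCommGroup E] [InnerProductSpace ℝ E]

/-- Expanding `‖S + v‖² = ‖S‖² + 2⟪v, S⟫ + ‖v‖²`, each step adds at most `‖v‖²` to the squared norm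
of the running sum. -/
theorem norm_sum_range_sq_le_sum_norm_sq (v : ℕ → E) (n : ℕ)
    (h : ∀ t < n, inner ℝ (v t) (∑ s ∈ range t, v s) ≤ (0 : ℝ)) :
    ‖∑ t ∈ range n, v t‖ ^ 2 ≤ ∑ t ∈ range n, ‖v t‖ ^ 2 := by
  induction n with
  | zero => simp
  | succ n ih =>
    have hprev := ih fun t ht => h t (ht.trans n.lt_succ_self)
    have hstep : inner ℝ (∑ s ∈ range n, v s) (v n) ≤ (0 : ℝ) := by
      rw [real_inner_comm]
      exact h n n.lt_succ_self
    rw [sum_range_succ, sum_range_succ, norm_add_sq_real]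
    linarith

theorem norm_sum_range_le_sqrt_mul (v : ℕ → E) (n : ℕ) (M : ℝ) (hM : ∀ t < n, ‖v t‖ ≤ M)
    (h : ∀ t < n, inner ℝ (v t) (∑ s ∈ range t, v s) ≤ (0 : ℝ)) :
    ‖∑ t ∈ range n, v t‖ ≤ √n * M := by
  rcases n.eq_zero_or_pos with rfl | hn
  · simp
  have hM0 : 0 ≤ M := (norm_nonneg _).trans (hM 0 hn)
  rw [← pow_le_pow_iff_left₀ (norm_nonneg _) (by positivity) two_ne_zero]
  calc ‖∑ t ∈ range n, v t‖ ^ 2 ≤ ∑ t ∈ range n, ‖v t‖ ^ 2 :=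
        norm_sum_range_sq_le_sum_norm_sq v n h
    _ ≤ ∑ _t ∈ range n, M ^ 2 :=
        sum_le_sum fun t ht => pow_le_pow_left₀ (norm_nonneg _) (hM t (mem_range.1 ht)) 2
    _ = (√n * M) ^ 2 := by simp [mul_pow]

end

theorem stmt_2_general {E : Type*} [NormedAddCommGroup E] [InnerProductSpace ℝ E]
    (T : ℕ) (v : ℕ → E) (M : ℝ)
    (hM : ∀ t < T, ‖v t‖ ≤ M)
    (h : ∀ t < T, inner ℝ (v t) (∑ s ∈ Finset.range t, v s) ≤ (0 : ℝ)) :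
    ‖(1 / T : ℝ) • ∑ t ∈ Finset.range T, v t‖ ≤ M / Real.sqrt T := by
  rw [norm_smul, Real.norm_of_nonneg (by positivity)]
  calc 1 / (T : ℝ) * ‖∑ t ∈ range T, v t‖ ≤ 1 / T * (√T * M) :=
        mul_le_mul_of_nonneg_left (norm_sum_range_le_sqrt_mul v T M hM h) (by positivity)
    _ = M / √T := by rw [← mul_assoc, one_div_mul_eq_div, Real.sqrt_div_self', one_div_mul_eq_div]

/-- Defensive Forecasting meta-bound. -/
theorem stmt_2 {E : Type*} [NormedAddCommGroup E] [InnerProductSpace ℝ E]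
    (T : ℕ) (hT : 0 < T) (v : ℕ → E) (M : ℝ)
    (hM : ∀ t < T, ‖v t‖ ≤ M)
    (h : ∀ t < T, inner ℝ (v t) (∑ s ∈ Finset.range t, v s) ≤ (0 : ℝ)) :
    ‖(1 / T : ℝ) • ∑ t ∈ Finset.range T, v t‖ ≤ M / Real.sqrt T :=
  stmt_2_general T v M hM h
end

section
/- Fix $\lambda \in [0,2]$ and $f \in [0,1]$. For all $p \in [0,1]$: $p \exp(\lambda[(p-1)^2 - (f-1)^2]) + (1-p)\exp(\lambda[p^2 - f^2]) \leq 1$. -/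
/-!
Writing `t = λ (p - f)`, both exponents share the term `λ (p² - f²)` and the one at `y = 1`
carries an extra `-2t`, so the left side is `exp (λ (p² - f²))` times the moment generating
function of a Bernoulli(`p`) variable at `-2t`. Hoeffding's lemma bounds the latter by
`exp (-2tp + t² / 2)`, and the exponents combine to `(-λ + λ² / 2) (p - f)²`, which is
nonpositive for `λ ∈ [0, 2]`.
-/

open Real ProbabilityTheory MeasureTheory

lemma bernoulli_mgf_le_exp {p : ℝ} (hp : p ∈ Set.Icc (0 : ℝ) 1) (t : ℝ) :
    p * exp t + (1 - p) ≤ exp (p * t + t ^ 2 / 8) := by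
  set μ := bernoulliMeasure true false ⟨p, hp⟩
  set X : Bool → ℝ := fun b => cond b 1 0
  have hmean : μ[X] = p := by simp [μ, X, integral_bernoulliMeasure]
  have hX : HasSubgaussianMGF (fun b => X b - μ[X]) ((‖(1 : ℝ) - 0‖₊ / 2) ^ 2) μ :=
    hasSubgaussianMGF_of_mem_Icc (by fun_prop) (ae_of_all _ fun b => by cases b <;> simp [X])
  have hmgf : mgf (fun b => X b - μ[X]) μ t = exp (-(p * t)) * (p * exp t + (1 - p)) := by
    simp only [mgf, μ, X, hmean, integral_bernoulliMeasure]
    rw [cond_true, cond_false, smul_eq_mul, smul_eq_mul, show t * (1 - p) = -(p * t) + t by ring,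
      show t * (0 - p) = -(p * t) by ring, exp_add]
    ring
  have hc : (((‖(1 : ℝ) - 0‖₊ / 2) ^ 2 : NNReal) : ℝ) * t ^ 2 / 2 = t ^ 2 / 8 := by
    norm_num; ring
  have h := hX.mgf_le t
  rw [hmgf, hc, ← le_div_iff₀' (exp_pos _), ← exp_sub, sub_neg_eq_add] at h
  simpa [add_comm] using h

lemma squared_loss_gap_mix_le_exp (lam f : ℝ) {p : ℝ} (hp : p ∈ Set.Icc (0 : ℝ) 1) :
    p * exp (lam * ((p - 1) ^ 2 - (f - 1) ^ 2)) + (1 - p) * exp (lam * (p ^ 2 - f ^ 2)) ≤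
      exp ((-lam + lam ^ 2 / 2) * (p - f) ^ 2) := by
  set t := lam * (p - f)
  calc _ = exp (lam * (p ^ 2 - f ^ 2)) * (p * exp (-2 * t) + (1 - p)) := by
        rw [show lam * ((p - 1) ^ 2 - (f - 1) ^ 2) = lam * (p ^ 2 - f ^ 2) + -2 * t by ring,
          exp_add]
        ring
    _ ≤ exp (lam * (p ^ 2 - f ^ 2)) * exp (p * (-2 * t) + (-2 * t) ^ 2 / 8) := by
        gcongr
        exact bernoulli_mgf_le_exp hp _
    _ = exp ((-lam + lam ^ 2 / 2) * (p - f) ^ 2) := by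
        rw [← exp_add]
        congr 1
        simp only [t]
        ring

theorem stmt_8_general (lam f p : ℝ) (hlam : lam ∈ Set.Icc (0 : ℝ) 2)
    (hp : p ∈ Set.Icc (0 : ℝ) 1) :
    p * Real.exp (lam * ((p - 1) ^ 2 - (f - 1) ^ 2)) +
      (1 - p) * Real.exp (lam * (p ^ 2 - f ^ 2)) ≤ 1 := by
  have hcoeff : -lam + lam ^ 2 / 2 ≤ 0 := by nlinarith [hlam.1, hlam.2]
  calc _ ≤ exp ((-lam + lam ^ 2 / 2) * (p - f) ^ 2) := squared_loss_gap_mix_le_exp lam f hp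
    _ ≤ 1 := exp_le_one_iff.mpr (mul_nonpos_of_nonpos_of_nonneg hcoeff (sq_nonneg _))

/-- Exponential boundedness for squared-loss gap functions. -/
theorem stmt_8 (lam f p : ℝ) (hlam : lam ∈ Set.Icc (0 : ℝ) 2)
    (hf : f ∈ Set.Icc (0 : ℝ) 1) (hp : p ∈ Set.Icc (0 : ℝ) 1) :
    p * Real.exp (lam * ((p - 1) ^ 2 - (f - 1) ^ 2)) +
      (1 - p) * Real.exp (lam * (p ^ 2 - f ^ 2)) ≤ 1 :=
  stmt_8_general lam f p hlam hp
end

section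
/- Let $F_1,\ldots,F_N : \mathcal{X} \times [0,1] \times \{0,1\} \to \mathbb{R}$ satisfy $p e^{F_j(x,p,1)} + (1-p)e^{F_j(x,p,0)} \leq 1$ for all $j, x, p$, and suppose each $F_j(x,p,y)$ is continuous in $p$. Suppose at each round $t$ the prediction $p_t$ satisfies $\sup_{y \in \{0,1\}} \sum_{j=1}^N \alpha_{jt} \exp(F_j(x_t,p_t,y)) \leq \sum_{j=1}^N \alpha_{jt} \left[p_t \exp(F_j(x_t,p_t,1)) + (1-p_t)\exp(F_j(x_t,p_t,0))\right]$, where $\alpha_{jt} \propto \exp(\sum_{s<t} F_j(x_s,p_s,y_s))$. Then for any outcome sequence $y_1,\ldots,y_T \in \{0,1\}$, $\max_{1 \leq j \leq N} \sum_{t=1}^T F_j(x_t,p_t,y_t) \leq \log N$. -/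
/-!
The soft-max potential `V t = ∑ⱼ exp (∑_{s<t} F_j(x_s, p_s, y_s))` starts at `V 0 = N`, and
`V (t+1) = V t · ∑ⱼ αⱼₜ exp (F_j(x_t, p_t, y_t))`. The prediction rule bounds the last sum by
the `α`-average of `p e^{F_j(x,p,1)} + (1-p) e^{F_j(x,p,0)}`, which is at most `1`, so `V` is
non-increasing. Hence `exp (∑ₜ F_j) ≤ V T ≤ N` for every `j`.
-/

open Finset Real

namespace DefensiveForecasting

variable {ι : Type*} [Fintype ι] (g : ι → ℕ → ℝ)

noncomputable def potential (t : ℕ) : ℝ :=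
  ∑ j, exp (∑ s ∈ range t, g j s)

noncomputable def weight (j : ι) (t : ℕ) : ℝ :=
  exp (∑ s ∈ range t, g j s) / potential g t

theorem potential_zero : potential g 0 = Fintype.card ι := by
  simp [potential]

theorem potential_pos [Nonempty ι] (t : ℕ) : 0 < potential g t :=
  sum_pos (fun _ _ => exp_pos _) univ_nonempty

theorem exp_sum_le_potential (j : ι) (t : ℕ) :
    exp (∑ s ∈ range t, g j s) ≤ potential g t :=
  single_le_sum (f := fun i => exp (∑ s ∈ range t, g i s)) (fun _ _ => (exp_pos _).le)
    (mem_univ j)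

theorem weight_nonneg (j : ι) (t : ℕ) : 0 ≤ weight g j t :=
  div_nonneg (exp_pos _).le (sum_nonneg fun _ _ => (exp_pos _).le)

theorem sum_weight [Nonempty ι] (t : ℕ) : ∑ j, weight g j t = 1 := by
  simp only [weight, ← sum_div]
  exact div_self (potential_pos g t).ne'

theorem potential_succ [Nonempty ι] (t : ℕ) :
    potential g (t + 1) = potential g t * ∑ j, weight g j t * exp (g j t) := by
  rw [mul_sum]
  refine sum_congr rfl fun j _ => ?_
  rw [sum_range_succ, exp_add, weight, ← mul_assoc, mul_div_cancel₀ _ (potential_pos g t).ne']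

theorem sum_le_log_card (hstep : ∀ t, ∑ j, weight g j t * exp (g j t) ≤ 1) (j : ι) (T : ℕ) :
    ∑ t ∈ range T, g j t ≤ log (Fintype.card ι) := by
  have : Nonempty ι := ⟨j⟩
  have hanti : Antitone (potential g) := antitone_nat_of_succ_le fun t => by
    rw [potential_succ]
    exact mul_le_of_le_one_right (potential_pos g t).le (hstep t)
  rw [le_log_iff_exp_le (by exact_mod_cast Fintype.card_pos)]
  calc exp (∑ t ∈ range T, g j t) ≤ potential g T := exp_sum_le_potential g j T
    _ ≤ potential g 0 := hanti (Nat.zero_le T)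
    _ = Fintype.card ι := potential_zero g

end DefensiveForecasting

open DefensiveForecasting

open Finset in
theorem stmt_10_general {X : Type*} (N T : ℕ)
    (F : Fin N → X → ℝ → ℝ → ℝ)
    (hbound : ∀ j x p, p ∈ Set.Icc (0 : ℝ) 1 →
      p * Real.exp (F j x p 1) + (1 - p) * Real.exp (F j x p 0) ≤ 1)
    (x : ℕ → X) (p y : ℕ → ℝ)
    (hp : ∀ t, p t ∈ Set.Icc (0 : ℝ) 1)
    (hy : ∀ t, y t = 0 ∨ y t = 1)
    (α : Fin N → ℕ → ℝ)
    (hα : ∀ j t, α j t =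
      Real.exp (∑ s ∈ range t, F j (x s) (p s) (y s)) /
        ∑ j' : Fin N, Real.exp (∑ s ∈ range t, F j' (x s) (p s) (y s)))
    (hpred : ∀ t, ∀ y' ∈ ({0, 1} : Set ℝ),
      ∑ j : Fin N, α j t * Real.exp (F j (x t) (p t) y') ≤
        ∑ j : Fin N, α j t *
          (p t * Real.exp (F j (x t) (p t) 1) +
            (1 - p t) * Real.exp (F j (x t) (p t) 0))) :
    ∀ j : Fin N, ∑ t ∈ range T, F j (x t) (p t) (y t) ≤ Real.log N := by
  intro j
  set g : Fin N → ℕ → ℝ := fun j t => F j (x t) (p t) (y t)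
  have : Nonempty (Fin N) := ⟨j⟩
  have hαg : α = weight g := funext₂ hα
  subst hαg
  have hstep (t : ℕ) : ∑ i, weight g i t * Real.exp (g i t) ≤ 1 :=
    calc ∑ i, weight g i t * Real.exp (g i t)
        ≤ ∑ i, weight g i t * (p t * Real.exp (F i (x t) (p t) 1) +
            (1 - p t) * Real.exp (F i (x t) (p t) 0)) :=
          hpred t (y t) (by rcases hy t with h | h <;> simp [h])
      _ ≤ ∑ i, weight g i t := sum_le_sum fun i _ =>
          mul_le_of_le_one_right (weight_nonneg g i t) (hbound i (x t) (p t) (hp t))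
      _ = 1 := sum_weight g t
  simpa using sum_le_log_card g hstep j T

open Finset in
/-- ℓ∞ Defensive Forecasting via the soft-max potential. -/
theorem stmt_10 {X : Type*} (N T : ℕ) (hN : 0 < N)
    (F : Fin N → X → ℝ → ℝ → ℝ)
    (hcont : ∀ j x y, Continuous fun p => F j x p y)
    (hbound : ∀ j x p, p ∈ Set.Icc (0 : ℝ) 1 →
      p * Real.exp (F j x p 1) + (1 - p) * Real.exp (F j x p 0) ≤ 1)
    (x : ℕ → X) (p y : ℕ → ℝ)
    (hp : ∀ t, p t ∈ Set.Icc (0 : ℝ) 1)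
    (hy : ∀ t, y t = 0 ∨ y t = 1)
    (α : Fin N → ℕ → ℝ)
    (hα : ∀ j t, α j t =
      Real.exp (∑ s ∈ range t, F j (x s) (p s) (y s)) /
        ∑ j' : Fin N, Real.exp (∑ s ∈ range t, F j' (x s) (p s) (y s)))
    (hpred : ∀ t, ∀ y' ∈ ({0, 1} : Set ℝ),
      ∑ j : Fin N, α j t * Real.exp (F j (x t) (p t) y') ≤
        ∑ j : Fin N, α j t *
          (p t * Real.exp (F j (x t) (p t) 1) +
            (1 - p t) * Real.exp (F j (x t) (p t) 0))) :
    ∀ j : Fin N, ∑ t ∈ range T, F j (x t) (p t) (y t) ≤ Real.log N :=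
  stmt_10_general N T F hbound x p y hp hy α hα hpred
end

section
/- Fix $q \in [0,1]$. Define $x_1 = 0$ and $x_{t+1} = (1 - 1/t)x_t + (1/t)\mathbf{1}\{x_t \leq q\}$ for $t \geq 1$. Then for all $T \geq 2$, $|x_T - q| \leq \frac{\max\{q, 1-q\}}{T-1}$. -/
/-!
The scaled error `e_t = (t - 1) (x_t - q)` satisfies `e_{t+1} = e_t + (1{x_t ≤ q} - q)`.
The increment has absolute value at most `max q (1 - q)` and sign opposite to `e_t`, and
adding two numbers of opposite signs never exceeds the larger absolute value; hence
`|e_t| ≤ max q (1 - q)` for every `t ≥ 1`, starting from `e_1 = 0`.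
-/

open Set

theorem abs_add_le_of_abs_le_of_opposite_signs {α : Type*} [AddCommGroup α] [LinearOrder α]
    [IsOrderedAddMonoid α] {a c M : α} (ha : |a| ≤ M) (hc : |c| ≤ M)
    (hsign : a ≤ 0 ∧ 0 ≤ c ∨ 0 ≤ a ∧ c ≤ 0) : |a + c| ≤ M := by
  rw [abs_le] at ha hc ⊢
  rcases hsign with ⟨ha0, hc0⟩ | ⟨ha0, hc0⟩
  · exact ⟨by simpa using add_le_add ha.1 hc0, by simpa using add_le_add ha0 hc.2⟩
  · exact ⟨by simpa using add_le_add ha0 hc.1, by simpa using add_le_add ha.2 hc0⟩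

theorem mul_abs_sub_le_of_quantile_step {q t x : ℝ} (hq : q ∈ Icc (0 : ℝ) 1) (ht : 1 ≤ t)
    (hx : (t - 1) * |x - q| ≤ max q (1 - q)) :
    t * |(1 - 1 / t) * x + 1 / t * (if x ≤ q then 1 else 0) - q| ≤ max q (1 - q) := by
  obtain ⟨hq0, hq1⟩ := hq
  set b : ℝ := if x ≤ q then 1 else 0
  have hscale : t * ((1 - 1 / t) * x + 1 / t * b - q) = (t - 1) * (x - q) + (b - q) := by
    field_simp
    ring
  calc t * |(1 - 1 / t) * x + 1 / t * b - q|
      = |(t - 1) * (x - q) + (b - q)| := by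
        rw [← hscale, abs_mul, abs_of_nonneg (by linarith : (0 : ℝ) ≤ t)]
    _ ≤ max q (1 - q) := ?_
  have ha : |(t - 1) * (x - q)| ≤ max q (1 - q) := by
    rwa [abs_mul, abs_of_nonneg (by linarith : (0 : ℝ) ≤ t - 1)]
  rcases le_or_gt x q with h | h
  · have hb1 : b = 1 := if_pos h
    refine abs_add_le_of_abs_le_of_opposite_signs ha ?_
      (Or.inl ⟨mul_nonpos_of_nonneg_of_nonpos (by linarith) (by linarith), by linarith⟩)
    rw [hb1, abs_of_nonneg (by linarith)]
    exact le_max_right q (1 - q)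
  · have hb0 : b = 0 := if_neg h.not_ge
    refine abs_add_le_of_abs_le_of_opposite_signs ha ?_
      (Or.inr ⟨mul_nonneg (by linarith) (by linarith), by linarith⟩)
    rw [hb0, zero_sub, abs_neg, abs_of_nonneg hq0]
    exact le_max_left q (1 - q)

theorem stmt_12_general (q : ℝ) (hq : q ∈ Set.Icc (0 : ℝ) 1) (x : ℕ → ℝ)
    (hrec : ∀ t : ℕ, 1 ≤ t →
      x (t + 1) = (1 - 1 / t) * x t + (1 / t) * (if x t ≤ q then 1 else 0)) :
    ∀ T : ℕ, 2 ≤ T → |x T - q| ≤ max q (1 - q) / ((T : ℝ) - 1) := by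
  have hscaled : ∀ T : ℕ, 1 ≤ T → ((T : ℝ) - 1) * |x T - q| ≤ max q (1 - q) := by
    intro T hT
    induction T, hT using Nat.le_induction with
    | base => simpa using hq.1.trans (le_max_left q (1 - q))
    | succ t ht ih =>
      rw [hrec t ht, Nat.cast_succ, add_sub_cancel_right]
      exact mul_abs_sub_le_of_quantile_step hq (by exact_mod_cast ht) ih
  intro T hT
  have hT1 : (0 : ℝ) < T - 1 := by
    have : (2 : ℝ) ≤ T := by exact_mod_cast hT
    linarith
  rw [le_div_iff₀ hT1, mul_comm]
  exact hscaled T (by omega)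

/-- The deterministic quantile recursion converges at rate 1/(T-1). -/
theorem stmt_12 (q : ℝ) (hq : q ∈ Set.Icc (0 : ℝ) 1) (x : ℕ → ℝ)
    (hx1 : x 1 = 0)
    (hrec : ∀ t : ℕ, 1 ≤ t →
      x (t + 1) = (1 - 1 / t) * x t + (1 / t) * (if x t ≤ q then 1 else 0)) :
    ∀ T : ℕ, 2 ≤ T → |x T - q| ≤ max q (1 - q) / ((T : ℝ) - 1) :=
  stmt_12_general q hq x hrec
end

section
/- For the quantile Defensive Forecasting strategy (predict $p_t = Y_{\max}$ if $\sum_{i<t}(\mathbf{1}\{y_i \leq p_i\} - q) \leq 0$ and $p_t = Y_{\min}$ otherwise, where $y_t \in (Y_{\min}, Y_{\max}]$), for every $t$ and every $y \in (Y_{\min}, Y_{\max}]$, $(\mathbf{1}\{y \leq p_t\} - q)\sum_{i=1}^{t-1}(\mathbf{1}\{y_i \leq p_i\} - q) \leq 0$, and consequently $\left(\sum_{t=1}^T \mathbf{1}\{y_t \leq p_t\} - qT\right)^2 \leq T$. -/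
/-!
Writing `a t` for the excess coverage `1{y_t ≤ p_t} - q` and `S t = ∑_{i<t} a i`, the strategy
plays `Y_max` (so `a t = 1 - q ≥ 0`) exactly when `S t ≤ 0`, and `Y_min` (so `a t = -q ≤ 0`)
otherwise; hence `a t * S t ≤ 0` whatever the outcome. Expanding
`S (t+1)² = S t² + 2 a t S t + a t²` with `a t² ≤ 1` then gives `S T² ≤ T`.
-/

theorem norm_sum_range_sq_le_of_inner_nonpos {E : Type*} [NormedAddCommGroup E]
    [InnerProductSpace ℝ E] (a : ℕ → E)
    (h_inner : ∀ t, inner ℝ (∑ i ∈ Finset.range t, a i) (a t) ≤ 0)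
    (h_norm : ∀ t, ‖a t‖ ≤ 1) (T : ℕ) : ‖∑ i ∈ Finset.range T, a i‖ ^ 2 ≤ T := by
  induction T with
  | zero => simp
  | succ n ih =>
    have h_sq : ‖a n‖ ^ 2 ≤ 1 := pow_le_one₀ (norm_nonneg _) (h_norm n)
    rw [Finset.sum_range_succ, norm_add_sq_real]
    push_cast
    linarith [h_inner n]

theorem quantile_error_mul_nonpos {Ymin Ymax q S y' : ℝ} (hq : q ∈ Set.Icc (0 : ℝ) 1)
    (hy' : y' ∈ Set.Ioc Ymin Ymax) :
    ((if y' ≤ (if S ≤ 0 then Ymax else Ymin) then (1 : ℝ) else 0) - q) * S ≤ 0 := by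
  by_cases hS : S ≤ 0
  · rw [if_pos hS, if_pos hy'.2]
    exact mul_nonpos_of_nonneg_of_nonpos (sub_nonneg.2 hq.2) hS
  · rw [if_neg hS, if_neg (not_le.2 hy'.1)]
    exact mul_nonpos_of_nonpos_of_nonneg (by linarith [hq.1]) (le_of_not_ge hS)

theorem abs_indicator_sub_le_one {q : ℝ} (hq : q ∈ Set.Icc (0 : ℝ) 1) (P : Prop)
    [Decidable P] :
    |(if P then (1 : ℝ) else 0) - q| ≤ 1 := by
  refine abs_sub_le_of_nonneg_of_le ?_ ?_ hq.1 hq.2 <;> split_ifs <;> norm_num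

open Finset in
theorem stmt_13_general (Ymin Ymax q : ℝ) (hq : q ∈ Set.Icc (0 : ℝ) 1)
    (y : ℕ → ℝ) (hy : ∀ t, y t ∈ Set.Ioc Ymin Ymax)
    (p : ℕ → ℝ)
    (hp : ∀ t, p t =
      if (∑ i ∈ range t, ((if y i ≤ p i then (1 : ℝ) else 0) - q)) ≤ 0
      then Ymax else Ymin) :
    (∀ t, ∀ y' ∈ Set.Ioc Ymin Ymax,
      ((if y' ≤ p t then (1 : ℝ) else 0) - q) *
        ∑ i ∈ range t, ((if y i ≤ p i then (1 : ℝ) else 0) - q) ≤ 0) ∧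
    ∀ T : ℕ,
      ((∑ t ∈ range T, (if y t ≤ p t then (1 : ℝ) else 0)) - q * T) ^ 2 ≤ T := by
  have anticorrelation : ∀ t, ∀ y' ∈ Set.Ioc Ymin Ymax,
      ((if y' ≤ p t then (1 : ℝ) else 0) - q) *
        ∑ i ∈ range t, ((if y i ≤ p i then (1 : ℝ) else 0) - q) ≤ 0 := by
    intro t y' hy'
    rw [hp t]
    exact quantile_error_mul_nonpos hq hy'
  refine ⟨anticorrelation, fun T => ?_⟩
  have h_sum : (∑ t ∈ range T, (if y t ≤ p t then (1 : ℝ) else 0)) - q * T =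
      ∑ t ∈ range T, ((if y t ≤ p t then (1 : ℝ) else 0) - q) := by
    rw [sum_sub_distrib, sum_const, card_range, nsmul_eq_mul, mul_comm]
  rw [h_sum, ← sq_abs, ← Real.norm_eq_abs]
  refine norm_sum_range_sq_le_of_inner_nonpos _ (fun t => ?_)
    (fun t => abs_indicator_sub_le_one hq _) T
  rw [Real.inner_apply, mul_comm]
  exact anticorrelation t (y t) (hy t)

open Finset in
/-- Quantile Defensive Forecasting: anticorrelation and the squared-sum bound. -/
theorem stmt_13 (Ymin Ymax q : ℝ) (hY : Ymin < Ymax) (hq : q ∈ Set.Icc (0 : ℝ) 1)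
    (y : ℕ → ℝ) (hy : ∀ t, y t ∈ Set.Ioc Ymin Ymax)
    (p : ℕ → ℝ)
    (hp : ∀ t, p t =
      if (∑ i ∈ range t, ((if y i ≤ p i then (1 : ℝ) else 0) - q)) ≤ 0
      then Ymax else Ymin) :
    (∀ t, ∀ y' ∈ Set.Ioc Ymin Ymax,
      ((if y' ≤ p t then (1 : ℝ) else 0) - q) *
        ∑ i ∈ range t, ((if y i ≤ p i then (1 : ℝ) else 0) - q) ≤ 0) ∧
    ∀ T : ℕ,
      ((∑ t ∈ range T, (if y t ≤ p t then (1 : ℝ) else 0)) - q * T) ^ 2 ≤ T :=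
  stmt_13_general Ymin Ymax q hq y hy p hp
end

section
/- Let $\mathcal{H}$ be a Hilbert space and $\Phi : \mathcal{X} \times [0,1] \to \mathcal{H}$. Suppose predictions satisfy the anticorrelation condition: at each round $t$, $(y_t - p_t)\langle \Phi(x_t,p_t), \sum_{s<t}(y_s - p_s)\Phi(x_s,p_s)\rangle \leq 0$, where $y_t \in \{0,1\}$ and $p_t \in [0,1]$. Then for every $h \in \mathcal{H}$, $\left|\sum_{t=1}^T \langle h, \Phi(x_t,p_t)\rangle (y_t - p_t)\right| \leq \|h\| \sqrt{\sum_{t=1}^T (y_t - p_t)^2 \|\Phi(x_t,p_t)\|^2}$. -/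
open Finset

section

variable {H : Type*} [NormedAddCommGroup H] [InnerProductSpace ℝ H]

theorem norm_add_smul_sq_real (u v : H) (a : ℝ) :
    ‖u + a • v‖ ^ 2 = ‖u‖ ^ 2 + 2 * (a * inner ℝ v u) + a ^ 2 * ‖v‖ ^ 2 := by
  rw [norm_add_sq_real, real_inner_smul_right, norm_smul, real_inner_comm, Real.norm_eq_abs,
    mul_pow, sq_abs]

/-- Adding the `m`-th term to the partial sum adds the cross term `2 * (a m * ⟪v m, partial sum⟫)`
to its squared norm, and this is nonpositive by anticorrelation. -/
theorem norm_sum_smul_sq_le_of_anticorrelated (a : ℕ → ℝ) (v : ℕ → H) {n : ℕ}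
    (hanti : ∀ t < n, a t * inner ℝ (v t) (∑ s ∈ range t, a s • v s) ≤ 0) :
    ‖∑ t ∈ range n, a t • v t‖ ^ 2 ≤ ∑ t ∈ range n, a t ^ 2 * ‖v t‖ ^ 2 := by
  induction n with
  | zero => simp
  | succ m ih =>
    have hm := hanti m (Nat.lt_succ_self m)
    have ih := ih fun t ht => hanti t (Nat.lt_succ_of_lt ht)
    rw [sum_range_succ, sum_range_succ, norm_add_smul_sq_real]
    linarith

theorem abs_sum_inner_mul_le_of_anticorrelated (a : ℕ → ℝ) (v : ℕ → H) {n : ℕ}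
    (hanti : ∀ t < n, a t * inner ℝ (v t) (∑ s ∈ range t, a s • v s) ≤ 0) (h : H) :
    |∑ t ∈ range n, inner ℝ h (v t) * a t| ≤
      ‖h‖ * Real.sqrt (∑ t ∈ range n, a t ^ 2 * ‖v t‖ ^ 2) := by
  have hsum : ∑ t ∈ range n, inner ℝ h (v t) * a t = inner ℝ h (∑ t ∈ range n, a t • v t) := by
    simp only [inner_sum, real_inner_smul_right, mul_comm]
  rw [hsum]
  calc |inner ℝ h (∑ t ∈ range n, a t • v t)| ≤ ‖h‖ * ‖∑ t ∈ range n, a t • v t‖ :=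
        abs_real_inner_le_norm _ _
    _ ≤ ‖h‖ * Real.sqrt (∑ t ∈ range n, a t ^ 2 * ‖v t‖ ^ 2) := by
        gcongr
        exact Real.le_sqrt_of_sq_le (norm_sum_smul_sq_le_of_anticorrelated a v hanti)

end

open Finset in
theorem stmt_15_general {X H : Type*} [NormedAddCommGroup H] [InnerProductSpace ℝ H]
    (T : ℕ) (Φ : X → ℝ → H) (x : ℕ → X) (p y : ℕ → ℝ)
    (hanti : ∀ t < T,
      (y t - p t) *
        inner ℝ (Φ (x t) (p t)) (∑ s ∈ range t, (y s - p s) • Φ (x s) (p s)) ≤ (0 : ℝ)) :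
    ∀ h : H,
      |∑ t ∈ range T, inner ℝ h (Φ (x t) (p t)) * (y t - p t)| ≤
        ‖h‖ * Real.sqrt (∑ t ∈ range T, (y t - p t) ^ 2 * ‖Φ (x t) (p t)‖ ^ 2) :=
  abs_sum_inner_mul_le_of_anticorrelated (fun t => y t - p t) (fun t => Φ (x t) (p t)) hanti

open Finset in
/-- Kernelized Defensive Forecasting (Vovk's K29). -/
theorem stmt_15 {X H : Type*} [NormedAddCommGroup H] [InnerProductSpace ℝ H]
    (T : ℕ) (Φ : X → ℝ → H) (x : ℕ → X) (p y : ℕ → ℝ)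
    (hp : ∀ t, p t ∈ Set.Icc (0 : ℝ) 1)
    (hy : ∀ t, y t = 0 ∨ y t = 1)
    (hanti : ∀ t < T,
      (y t - p t) *
        inner ℝ (Φ (x t) (p t)) (∑ s ∈ range t, (y s - p s) • Φ (x s) (p s)) ≤ (0 : ℝ)) :
    ∀ h : H,
      |∑ t ∈ range T, inner ℝ h (Φ (x t) (p t)) * (y t - p t)| ≤
        ‖h‖ * Real.sqrt (∑ t ∈ range T, (y t - p t) ^ 2 * ‖Φ (x t) (p t)‖ ^ 2) :=
  stmt_15_general T Φ x p y hanti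
end

section
/- Let $\Omega$ be a finite set of bounded functions $\omega : \mathcal{X} \times \mathcal{P} \times \mathcal{Y} \to \mathbb{R}$. Suppose an online algorithm run on any sequence produces deterministic prediction functions $f_1, \ldots, f_n$ (where $f_t$ depends only on the history before time $t$) with $\sup_{\omega \in \Omega}|\sum_{t=1}^n \omega(x_t, f_t(x_t), y_t)| \leq \mathcal{R}(n)$. If $(x_1,y_1),\ldots,(x_n,y_n)$ are drawn i.i.d. from a distribution $\mathcal{D}$, and $\mathcal{A}_S$ is the randomized predictor that on input $x$ picks $i$ uniformly from $\{1,\ldots,n\}$ and outputs $f_i(x)$, then $\sup_{\omega \in \Omega}\left|\mathbb{E}_{S \sim \mathcal{D}^n,\,(x,y)\sim\mathcal{D},\,p \sim \mathcal{A}_S(x)}[\omega(x,p,y)]\right| \leq \frac{\mathcal{R}(n)}{n}$. -/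
/-!
Draw `n + 1` i.i.d. samples and let `σ` run over all permutations of their indices. Taking the
first `n` permuted samples as the training sequence and the last one as the test point gives, for
every `σ`, a sample with the law of (training sequence, test point), so the expected batch loss is
the average over `σ` of these transported losses. Pointwise, that sum over `σ` is a sum of online
regrets: precomposing `σ` with the transposition of `i` and the last index turns the test point
into the `i`-th sample and leaves the first `i` samples, the only ones the `i`-th predictor sees,
untouched. Each regret is at most `R n` in absolute value.
-/

open MeasureTheory Finset

section

variable {n : ℕ} {α M : Type*}

theorem measurePreserving_comp_perm {ι : Type*} [Fintype ι] [MeasurableSpace α]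
    (μ : Measure α) [SigmaFinite μ] (σ : Equiv.Perm ι) :
    MeasurePreserving (fun x : ι → α => x ∘ σ) (Measure.pi fun _ => μ)
      (Measure.pi fun _ => μ) := by
  convert measurePreserving_piCongrLeft (fun _ : ι => μ) σ.symm using 1
  ext x i
  simpa using (MeasurableEquiv.piCongrLeft_apply_apply (β := fun _ => α) σ.symm x (σ i)).symm

theorem measurePreserving_init_last [MeasurableSpace α]
    (μ : Measure α) [SigmaFinite μ] :
    MeasurePreserving (fun x : Fin (n + 1) → α => (Fin.init x, x (Fin.last n)))
      (Measure.pi fun _ => μ) ((Measure.pi fun _ => μ).prod μ) := by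
  convert Measure.measurePreserving_swap.comp
    (measurePreserving_piFinSuccAbove (fun _ : Fin (n + 1) => μ) (Fin.last n)) using 1
  ext x : 1
  simp

theorem sum_perm_sum_last_eq_sum_perm_sum_castSucc [AddCommMonoid M]
    (F : (t : ℕ) → (Fin t → α) → α → M) (T : Fin (n + 1) → α) :
    ∑ σ : Equiv.Perm (Fin (n + 1)), ∑ i : Fin n,
        F i (Fin.take i i.isLt.le (Fin.init (T ∘ σ))) (T (σ (Fin.last n)))
      = ∑ σ : Equiv.Perm (Fin (n + 1)), ∑ i : Fin n,
        F i (Fin.take i i.isLt.le (Fin.init (T ∘ σ))) (T (σ i.castSucc)) := by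
  conv_lhs => rw [Finset.sum_comm]
  conv_rhs => rw [Finset.sum_comm]
  refine Finset.sum_congr rfl fun i _ => ?_
  set τ := Equiv.swap i.castSucc (Fin.last n)
  have hτ_prefix : ∀ j : Fin (n + 1), (j : ℕ) < i → τ j = j := fun j hj =>
    Equiv.swap_apply_of_ne_of_ne (by simp [Fin.ext_iff]; omega) (by simp [Fin.ext_iff]; omega)
  refine (Fintype.sum_equiv (Equiv.mulRight τ) _ _ fun σ => ?_).symm
  have h_take : Fin.take i i.isLt.le (Fin.init (T ∘ ⇑(σ * τ)))
      = Fin.take i i.isLt.le (Fin.init (T ∘ σ)) := by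
    funext j
    simp only [Fin.take_apply, Fin.init, Function.comp_apply, Equiv.Perm.mul_apply]
    rw [hτ_prefix _ (by simp)]
  simp only [Equiv.coe_mulRight, h_take, Equiv.Perm.mul_apply, τ, Equiv.swap_apply_right]

theorem sum_range_eq_sum_take [AddCommMonoid M] (F : (t : ℕ) → (Fin t → α) → α → M)
    (s : ℕ → α) (S : Fin n → α) (hs : ∀ i : Fin n, s i = S i) :
    ∑ t ∈ range n, F t (fun i : Fin t => s i) (s t)
      = ∑ i : Fin n, F i (Fin.take i i.isLt.le S) (S i) := by
  rw [← Fin.sum_univ_eq_sum_range]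
  refine Finset.sum_congr rfl fun i _ => ?_
  congr 1
  · funext j
    simp only [Fin.take_apply]
    exact hs (Fin.castLE _ j)
  · exact hs i

theorem abs_sum_perm_sum_le_of_abs_sum_range_le (F : (t : ℕ) → (Fin t → α) → α → ℝ)
    {C : ℝ} (hF : ∀ s : ℕ → α, |∑ t ∈ range n, F t (fun i : Fin t => s i) (s t)| ≤ C)
    (T : Fin (n + 1) → α) :
    |∑ σ : Equiv.Perm (Fin (n + 1)), ∑ i : Fin n,
        F i (Fin.take i i.isLt.le (Fin.init (T ∘ σ))) (T (σ (Fin.last n)))|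
      ≤ Fintype.card (Equiv.Perm (Fin (n + 1))) * C := by
  rw [sum_perm_sum_last_eq_sum_perm_sum_castSucc F T]
  refine (abs_sum_le_sum_abs _ _).trans ?_
  refine (sum_le_sum (g := fun _ => C) fun σ _ => ?_).trans_eq (by simp)
  set s : ℕ → α := fun t => if h : t < n + 1 then T (σ ⟨t, h⟩) else T (σ (Fin.last n))
  have hs : ∀ i : Fin n, s i = Fin.init (T ∘ σ) i := fun i =>
    dif_pos (Nat.lt_succ_of_lt i.isLt)
  have h_regret := hF s
  rwa [sum_range_eq_sum_take F s _ hs] at h_regret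

theorem abs_integral_prod_le_of_abs_sum_perm_le [MeasurableSpace α]
    (μ : Measure α) [IsProbabilityMeasure μ] {g : (Fin n → α) × α → ℝ}
    (hg : Integrable g ((Measure.pi fun _ => μ).prod μ)) {C : ℝ}
    (hC : ∀ T : Fin (n + 1) → α,
      |∑ σ : Equiv.Perm (Fin (n + 1)), g (Fin.init (T ∘ σ), T (σ (Fin.last n)))|
        ≤ Fintype.card (Equiv.Perm (Fin (n + 1))) * C) :
    |∫ z, g z ∂(Measure.pi fun _ => μ).prod μ| ≤ C := by
  set ν := (Measure.pi fun _ : Fin n => μ).prod μ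
  set split := fun (σ : Equiv.Perm (Fin (n + 1))) (T : Fin (n + 1) → α) =>
    (Fin.init (T ∘ σ), T (σ (Fin.last n)))
  have h_mp : ∀ σ, MeasurePreserving (split σ) (Measure.pi fun _ => μ) ν := fun σ =>
    (measurePreserving_init_last μ).comp (measurePreserving_comp_perm μ σ)
  have h_integral : ∀ σ, ∫ T, g (split σ T) ∂(Measure.pi fun _ => μ) = ∫ z, g z ∂ν :=
    fun σ => by
      rw [← integral_map (h_mp σ).measurable.aemeasurable ((h_mp σ).map_eq ▸ hg.1),
        (h_mp σ).map_eq]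
  have h_sum : Fintype.card (Equiv.Perm (Fin (n + 1))) * ∫ z, g z ∂ν
      = ∫ T, ∑ σ, g (split σ T) ∂(Measure.pi fun _ => μ) := by
    rw [integral_finsetSum (f := fun σ T => g (split σ T)) _ fun σ _ =>
      (h_mp σ).integrable_comp_of_integrable hg]
    simp [h_integral]
  have h_bound : ‖∫ T, ∑ σ, g (split σ T) ∂(Measure.pi fun _ => μ)‖
      ≤ Fintype.card (Equiv.Perm (Fin (n + 1))) * C := by
    simpa using norm_integral_le_of_norm_le_const (μ := Measure.pi fun _ => μ)
      (Filter.Eventually.of_forall fun T => (Real.norm_eq_abs _).trans_le (hC T))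
  rw [← h_sum, Real.norm_eq_abs, abs_mul, Nat.abs_cast] at h_bound
  exact le_of_mul_le_mul_left h_bound (by positivity)

end

open MeasureTheory Finset in
theorem stmt_17_general {X P Y : Type*} [MeasurableSpace X] [MeasurableSpace Y]
    (D : Measure (X × Y)) [IsProbabilityMeasure D]
    (n : ℕ)
    (Ω : Finset (X → P → Y → ℝ))
    (hbdd : ∀ ω ∈ Ω, ∃ B : ℝ, ∀ x p y, |ω x p y| ≤ B)
    (A : (t : ℕ) → (Fin t → X × Y) → X → P)
    (hmeas : ∀ ω ∈ Ω, Measurable fun z : (Fin n → X × Y) × (X × Y) =>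
      ∑ i : Fin n,
        ω z.2.1 (A i.val (fun j => z.1 (Fin.castLE i.isLt.le j)) z.2.1) z.2.2)
    (R : ℕ → ℝ)
    (hregret : ∀ s : ℕ → X × Y, ∀ ω ∈ Ω,
      |∑ t ∈ range n, ω (s t).1 (A t (fun i : Fin t => s i.val) (s t).1) (s t).2|
        ≤ R n) :
    ∀ ω ∈ Ω,
      |∫ S : Fin n → X × Y, ∫ xy : X × Y,
          (1 / n : ℝ) * ∑ i : Fin n,
            ω xy.1 (A i.val (fun j => S (Fin.castLE i.isLt.le j)) xy.1) xy.2
          ∂D ∂(Measure.pi fun _ : Fin n => D)| ≤ R n / n := by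
  intro ω hω
  set loss : (t : ℕ) → (Fin t → X × Y) → X × Y → ℝ := fun t h z =>
    ω z.1 (A t h z.1) z.2
  set g : (Fin n → X × Y) × (X × Y) → ℝ := fun z =>
    ∑ i : Fin n, loss i (Fin.take i i.isLt.le z.1) z.2
  obtain ⟨B, hB⟩ := hbdd ω hω
  have hg : Integrable g ((Measure.pi fun _ => D).prod D) :=
    Integrable.of_bound (hmeas ω hω).aestronglyMeasurable (n * B) <| ae_of_all _ fun z =>
      calc ‖g z‖ ≤ ∑ i : Fin n, ‖loss i (Fin.take i i.isLt.le z.1) z.2‖ :=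
            norm_sum_le _ _
        _ ≤ ∑ _i : Fin n, B := sum_le_sum fun i _ => hB _ _ _
        _ = n * B := by simp
  have h_fubini : ∫ S, ∫ xy, (1 / n : ℝ) * g (S, xy) ∂D ∂(Measure.pi fun _ => D)
      = (1 / n : ℝ) * ∫ z, g z ∂(Measure.pi fun _ => D).prod D := by
    rw [← integral_prod _ (hg.const_mul _), integral_const_mul]
  change |∫ S, ∫ xy, (1 / n : ℝ) * g (S, xy) ∂D ∂(Measure.pi fun _ => D)| ≤ _
  rw [h_fubini, abs_mul, abs_of_nonneg (by positivity), one_div_mul_eq_div]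
  exact div_le_div_of_nonneg_right (abs_integral_prod_le_of_abs_sum_perm_le D hg
    (abs_sum_perm_sum_le_of_abs_sum_range_le loss fun s => hregret s ω hω)) n.cast_nonneg

open MeasureTheory Finset in
/-- Online-to-batch conversion, in-expectation version. -/
theorem stmt_17 {X P Y : Type*} [MeasurableSpace X] [MeasurableSpace Y]
    (D : Measure (X × Y)) [IsProbabilityMeasure D]
    (n : ℕ) (hn : 0 < n)
    (Ω : Finset (X → P → Y → ℝ))
    (hbdd : ∀ ω ∈ Ω, ∃ B : ℝ, ∀ x p y, |ω x p y| ≤ B)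
    (A : (t : ℕ) → (Fin t → X × Y) → X → P)
    (hmeas : ∀ ω ∈ Ω, Measurable fun z : (Fin n → X × Y) × (X × Y) =>
      ∑ i : Fin n,
        ω z.2.1 (A i.val (fun j => z.1 (Fin.castLE i.isLt.le j)) z.2.1) z.2.2)
    (R : ℕ → ℝ)
    (hregret : ∀ s : ℕ → X × Y, ∀ ω ∈ Ω,
      |∑ t ∈ range n, ω (s t).1 (A t (fun i : Fin t => s i.val) (s t).1) (s t).2|
        ≤ R n) :
    ∀ ω ∈ Ω,
      |∫ S : Fin n → X × Y, ∫ xy : X × Y,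
          (1 / n : ℝ) * ∑ i : Fin n,
            ω xy.1 (A i.val (fun j => S (Fin.castLE i.isLt.le j)) xy.1) xy.2
          ∂D ∂(Measure.pi fun _ : Fin n => D)| ≤ R n / n :=
  stmt_17_general D n Ω hbdd A hmeas R hregret
end

section
/- Suppose $S_{t}(p_{1}) < 0 < S_{t}(p_{2})$ for two points $p_1, p_2$, and let $\tau = \frac{|S_t(p_2)|}{|S_t(p_1)| + |S_t(p_2)|}$. Then $\tau \in (0,1)$ and $\tau S_t(p_1) + (1-\tau) S_t(p_2) = 0$. Moreover, if $\Delta$ is any probability distribution on outcomes $y$ whose CDF is $L$-Lipschitz, and $|p_1 - p_2| \leq \gamma$, then for any $q \in [0,1]$, $\left|\tau\, S_t(p_1)\, \mathbb{E}_{y\sim\Delta}[\mathbf{1}\{y \leq p_1\} - \mathbf{1}\{y \leq p_2\}]\right| \leq |S_t(p_1)| \cdot L \cdot \gamma$, and hence $\mathbb{E}_{p,y}[(\mathbf{1}\{y \leq p\} - q) S_t(p)] \leq |S_t(p_1)| L \gamma$ where $p$ equals $p_1$ with probability $\tau$ and $p_2$ with probability $1-\tau$. -/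
/-!
The weight `τ = |b| / (|a| + |b|)` on `a = S(p₁) < 0 < b = S(p₂)` makes the hedged score
`τ a + (1 - τ) b` vanish. Writing `F` for the CDF of `Δ`, the expected payoff of the hedge is
`τ (F p₁ - q) a + (1 - τ) (F p₂ - q) b`; subtracting `(F p₂ - q)` times the vanishing score leaves
`τ a (F p₁ - F p₂)`, which the Lipschitz bound on `F` makes at most `|a| L γ`.
-/

open MeasureTheory Set

noncomputable def balancingWeight (a b : ℝ) : ℝ := |b| / (|a| + |b|)

section balancingWeight

variable {a b : ℝ}

theorem balancingWeight_mem_Ioo (ha : a < 0) (hb : 0 < b) : balancingWeight a b ∈ Ioo 0 1 := by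
  have hsum : 0 < |a| + |b| := by positivity
  refine ⟨div_pos (abs_pos.2 hb.ne') hsum, (div_lt_one hsum).2 ?_⟩
  simpa using abs_pos.2 ha.ne

theorem balancingWeight_mul_add (ha : a < 0) (hb : 0 < b) :
    balancingWeight a b * a + (1 - balancingWeight a b) * b = 0 := by
  have hsum : -a + b ≠ 0 := by linarith
  rw [balancingWeight, abs_of_neg ha, abs_of_pos hb]
  field_simp
  ring

end balancingWeight

theorem nonneg_of_abs_sub_le_mul_abs_sub {f : ℝ → ℝ} {L : ℝ}
    (hf : ∀ v v', |f v - f v'| ≤ L * |v - v'|) : 0 ≤ L := by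
  simpa using (abs_nonneg _).trans (hf 0 1)

section CDF

variable (μ : Measure ℝ)

theorem integral_ite_le_eq_measureReal_Iic [IsFiniteMeasure μ] (p : ℝ) :
    ∫ y, (if y ≤ p then (1 : ℝ) else 0) ∂μ = μ.real (Iic p) := by
  rw [← integral_indicator_one measurableSet_Iic]
  rfl

theorem integrable_ite_le [IsFiniteMeasure μ] (p : ℝ) :
    Integrable (fun y => if y ≤ p then (1 : ℝ) else 0) μ :=
  (integrable_const (1 : ℝ)).indicator (s := Iic p) measurableSet_Iic

theorem integral_ite_le_sub_ite_le [IsFiniteMeasure μ] (p₁ p₂ : ℝ) :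
    ∫ y, ((if y ≤ p₁ then (1 : ℝ) else 0) - (if y ≤ p₂ then (1 : ℝ) else 0)) ∂μ
      = μ.real (Iic p₁) - μ.real (Iic p₂) := by
  rw [integral_sub (integrable_ite_le μ p₁) (integrable_ite_le μ p₂),
    integral_ite_le_eq_measureReal_Iic, integral_ite_le_eq_measureReal_Iic]

theorem integral_ite_le_sub_mul_const [IsProbabilityMeasure μ] (p q c : ℝ) :
    ∫ y, ((if y ≤ p then (1 : ℝ) else 0) - q) * c ∂μ = (μ.real (Iic p) - q) * c := by
  rw [integral_mul_const, integral_sub (integrable_ite_le μ p) (integrable_const q),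
    integral_ite_le_eq_measureReal_Iic, integral_const, probReal_univ, one_smul]

end CDF

theorem abs_mul_mul_le_of_mem_Icc {τ a d L γ : ℝ} (hτ : τ ∈ Icc 0 1)
    (hd : |d| ≤ L * γ) : |τ * a * d| ≤ |a| * L * γ := by
  rw [abs_mul, abs_mul, abs_of_nonneg hτ.1, mul_assoc, mul_assoc]
  calc τ * (|a| * |d|) ≤ 1 * (|a| * |d|) := by gcongr; exact hτ.2
    _ ≤ |a| * (L * γ) := by rw [one_mul]; gcongr

open MeasureTheory in
theorem stmt_19_general (St : ℝ → ℝ) (p1 p2 : ℝ)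
    (h1 : St p1 < 0) (h2 : 0 < St p2)
    (τ : ℝ) (hτdef : τ = |St p2| / (|St p1| + |St p2|))
    (Δ : Measure ℝ) [IsProbabilityMeasure Δ] (L : ℝ)
    (hLip : ∀ v v' : ℝ,
      |(Δ (Set.Iic v)).toReal - (Δ (Set.Iic v')).toReal| ≤ L * |v - v'|)
    (γ : ℝ) (hγ : |p1 - p2| ≤ γ) (q : ℝ) :
    τ ∈ Set.Ioo (0 : ℝ) 1 ∧
    τ * St p1 + (1 - τ) * St p2 = 0 ∧
    |τ * St p1 *
        ∫ y, ((if y ≤ p1 then (1 : ℝ) else 0) - (if y ≤ p2 then (1 : ℝ) else 0)) ∂Δ|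
      ≤ |St p1| * L * γ ∧
    τ * ∫ y, ((if y ≤ p1 then (1 : ℝ) else 0) - q) * St p1 ∂Δ +
        (1 - τ) * ∫ y, ((if y ≤ p2 then (1 : ℝ) else 0) - q) * St p2 ∂Δ
      ≤ |St p1| * L * γ := by
  have hτ : τ ∈ Ioo 0 1 := hτdef ▸ balancingWeight_mem_Ioo h1 h2
  have hbalance : τ * St p1 + (1 - τ) * St p2 = 0 := hτdef ▸ balancingWeight_mul_add h1 h2
  have hcdf : |Δ.real (Iic p1) - Δ.real (Iic p2)| ≤ L * γ :=
    (hLip p1 p2).trans (mul_le_mul_of_nonneg_left hγ (nonneg_of_abs_sub_le_mul_abs_sub hLip))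
  have hbound := abs_mul_mul_le_of_mem_Icc (a := St p1) (Ioo_subset_Icc_self hτ) hcdf
  refine ⟨hτ, hbalance, by rwa [integral_ite_le_sub_ite_le], ?_⟩
  rw [integral_ite_le_sub_mul_const, integral_ite_le_sub_mul_const]
  calc _ = τ * St p1 * (Δ.real (Iic p1) - Δ.real (Iic p2)) := by
        linear_combination (Δ.real (Iic p2) - q) * hbalance
    _ ≤ |St p1| * L * γ := (le_abs_self _).trans hbound

open MeasureTheory in
/-- Randomized anticorrelation search for quantile Defensive Forecasting. -/
theorem stmt_19 (St : ℝ → ℝ) (p1 p2 : ℝ)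
    (h1 : St p1 < 0) (h2 : 0 < St p2)
    (τ : ℝ) (hτdef : τ = |St p2| / (|St p1| + |St p2|))
    (Δ : Measure ℝ) [IsProbabilityMeasure Δ] (L : ℝ)
    (hLip : ∀ v v' : ℝ,
      |(Δ (Set.Iic v)).toReal - (Δ (Set.Iic v')).toReal| ≤ L * |v - v'|)
    (γ : ℝ) (hγ : |p1 - p2| ≤ γ) (q : ℝ) (hq : q ∈ Set.Icc (0 : ℝ) 1) :
    τ ∈ Set.Ioo (0 : ℝ) 1 ∧
    τ * St p1 + (1 - τ) * St p2 = 0 ∧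
    |τ * St p1 *
        ∫ y, ((if y ≤ p1 then (1 : ℝ) else 0) - (if y ≤ p2 then (1 : ℝ) else 0)) ∂Δ|
      ≤ |St p1| * L * γ ∧
    τ * ∫ y, ((if y ≤ p1 then (1 : ℝ) else 0) - q) * St p1 ∂Δ +
        (1 - τ) * ∫ y, ((if y ≤ p2 then (1 : ℝ) else 0) - q) * St p2 ∂Δ
      ≤ |St p1| * L * γ :=
  stmt_19_general St p1 p2 h1 h2 τ hτdef Δ L hLip γ hγ q
end
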